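/- Let X be a separable Banach space and Ω a metric space with Ω = ⋃_{m=1}^∞ Ω_m where each Ω_m is a Borel subset of Ω, and let θ : ℝ → (Ω → Ω) be a group of Borel-measurable transformations. Let Φ be a multivalued non-autonomous cocycle on X over θ and 𝒟 an inclusion-closed collection of families of nonempty subsets of X. Assume Φ is 𝒟-pullback asymptotically compact, Φ(t, τ, ω, ·) : X → 2^X is upper semicontinuous for each t ≥ 0, τ ∈ ℝ, ω ∈ Ω, K ∈ 𝒟 is a closed 𝒟-pullback absorbing set of Φ, and for every m ∈ ℕ, t ≥ 0 and τ ∈ ℝ the set-valued map ω ↦ Φ(t, τ, ω, K(τ, ω)) restricted to Ω_m is weakly upper semicontinuous. Then for every τ ∈ ℝ the set-valued map ω ↦ Ω(K)(τ, ω) is measurable with respect to the Borel σ-algebra of Ω. -/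

import Mathlib

/-!
Write `F_t(ω) = Φ(t, τ − t, θ_{−t} ω, K(τ − t, θ_{−t} ω))`. By the cocycle property and
absorption of `K` by itself the `F_t` are eventually nested, so `Ω(K)(τ, ω)` lies in the closure
of every `F_n`; conversely, by pullback asymptotic compactness, points `x_n ∈ F_n(ω)` have a
subsequence converging to a point of `Ω(K)(τ, ω)`. Hence, with `(d_i)` dense in `X`,
`Ω(K)(τ, ω)` meets `O` iff for some rational ball `B(d_i, p) ⊆ O` every `F_n(ω)` meets
`B(d_i, p + 1/(n+1))`: a countable combination of the events `{ω | F_n(ω) ∩ C ≠ ∅}`, `C` a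
closed ball. Such an event is the `θ_{−n}`-preimage of a set whose trace on each `Ω_m` is
relatively sequentially closed, because weak upper semicontinuity yields weak limits and
closed balls are weakly closed; so it is Borel.
-/

open Filter Topology Set ENNReal

/-- The image of a set under a multivalued map: `Φ(t, τ, ω, S) = ⋃_{x ∈ S} Φ(t, τ, ω, x)`. -/
def imageSet10 {Ω X : Type*} (Φ : ℝ → ℝ → Ω → X → Set X)
    (t τ : ℝ) (ω : Ω) (S : Set X) : Set X :=
  ⋃ x ∈ S, Φ t τ ω x

/-- The `Ω`-limit set of a family `B`:
`Ω(B)(τ, ω) = ⋂_{r ≥ 0} cl (⋃_{t ≥ r} Φ(t, τ − t, θ_{−t} ω, B(τ − t, θ_{−t} ω)))`. -/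
def omegaLimit10 {Ω X : Type*} [MetricSpace X] (Φ : ℝ → ℝ → Ω → X → Set X)
    (θ : ℝ → Ω → Ω) (B : ℝ → Ω → Set X) (τ : ℝ) (ω : Ω) : Set X :=
  ⋂ (r : ℝ) (_ : 0 ≤ r),
    closure (⋃ (t : ℝ) (_ : r ≤ t),
      imageSet10 Φ t (τ - t) (θ (-t) ω) (B (τ - t) (θ (-t) ω)))

/-- The Hausdorff semidistance `d(A, B) = sup_{a ∈ A} inf_{b ∈ B} d(a, b)` (valued in
`ℝ≥0∞`). -/
noncomputable def hausSemidist10 {X : Type*} [MetricSpace X] (A B : Set X) : ℝ≥0∞ :=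
  ⨆ a ∈ A, EMetric.infEdist a B

def pullbackImage {Ω X : Type*} (Φ : ℝ → ℝ → Ω → X → Set X) (θ : ℝ → Ω → Ω)
    (K : ℝ → Ω → Set X) (τ t : ℝ) (ω : Ω) : Set X :=
  imageSet10 Φ t (τ - t) (θ (-t) ω) (K (τ - t) (θ (-t) ω))

/-- Weak convergence `z_k ⇀ z₀` is encoded as `ℓ z_k → ℓ z₀` for every `ℓ ∈ X*`. -/
def WeaklyUpperSemicontinuousOn {Ω X : Type*} [TopologicalSpace Ω] [TopologicalSpace X]
    [AddCommGroup X] [Module ℝ X] (G : Ω → Set X) (s : Set Ω) : Prop :=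
  ∀ ω₀ ∈ s, ∀ ω : ℕ → Ω, (∀ n, ω n ∈ s) → Tendsto ω atTop (𝓝 ω₀) →
    ∀ z : ℕ → X, (∀ n, z n ∈ G (ω n)) →
      ∃ z₀ ∈ G ω₀, ∃ φ : ℕ → ℕ, StrictMono φ ∧
        ∀ ℓ : X →L[ℝ] ℝ, Tendsto (fun k => ℓ (z (φ k))) atTop (𝓝 (ℓ z₀))

lemma Convex.mem_of_weakly_tendsto {X ι : Type*} [TopologicalSpace X] [AddCommGroup X]
    [Module ℝ X] [IsTopologicalAddGroup X] [ContinuousSMul ℝ X] [LocallyConvexSpace ℝ X]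
    {C : Set X} (hconv : Convex ℝ C) (hC : IsClosed C) {l : Filter ι} [l.NeBot]
    {z : ι → X} (hz : ∀ᶠ i in l, z i ∈ C) {z₀ : X}
    (h : ∀ ℓ : X →L[ℝ] ℝ, Tendsto (fun i => ℓ (z i)) l (𝓝 (ℓ z₀))) : z₀ ∈ C := by
  by_contra hz₀
  obtain ⟨ℓ, u, hℓC, hℓz₀⟩ := geometric_hahn_banach_closed_point hconv hC hz₀
  have : ℓ z₀ ≤ u := le_of_tendsto (h ℓ) (hz.mono fun i hi => (hℓC _ hi).le)
  linarith

section Measurability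

variable {Ω : Type*} [TopologicalSpace Ω] [FrechetUrysohnSpace Ω] [MeasurableSpace Ω]
  [OpensMeasurableSpace Ω] {Ωm : ℕ → Set Ω}

lemma measurableSet_of_seqClosed_on_cover (hΩm : ∀ m, MeasurableSet (Ωm m))
    (hcover : ⋃ m, Ωm m = univ) {S : Set Ω}
    (hS : ∀ m, ∀ ω₀ ∈ Ωm m, ∀ ω : ℕ → Ω, (∀ n, ω n ∈ S ∩ Ωm m) →
      Tendsto ω atTop (𝓝 ω₀) → ω₀ ∈ S) :
    MeasurableSet S := by
  have hS_eq : S = ⋃ m, Ωm m ∩ closure (S ∩ Ωm m) := by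
    refine Subset.antisymm (fun ω hω => ?_) (iUnion_subset fun m => ?_)
    · obtain ⟨m, hm⟩ := mem_iUnion.1 (hcover.symm ▸ mem_univ ω)
      exact mem_iUnion.2 ⟨m, hm, subset_closure ⟨hω, hm⟩⟩
    · rintro ω ⟨hm, hcl⟩
      obtain ⟨u, hu, hlim⟩ := mem_closure_iff_seq_limit.1 hcl
      exact hS m ω hm u hu hlim
  rw [hS_eq]
  exact .iUnion fun m => (hΩm m).inter isClosed_closure.measurableSet

lemma WeaklyUpperSemicontinuousOn.measurableSet_inter_nonempty {X : Type*}
    [TopologicalSpace X] [AddCommGroup X] [Module ℝ X] [IsTopologicalAddGroup X]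
    [ContinuousSMul ℝ X] [LocallyConvexSpace ℝ X] {G : Ω → Set X}
    (hG : ∀ m, WeaklyUpperSemicontinuousOn G (Ωm m)) (hΩm : ∀ m, MeasurableSet (Ωm m))
    (hcover : ⋃ m, Ωm m = univ) {C : Set X} (hconv : Convex ℝ C) (hC : IsClosed C) :
    MeasurableSet {ω | (G ω ∩ C).Nonempty} := by
  refine measurableSet_of_seqClosed_on_cover hΩm hcover fun m ω₀ hω₀ ω hω hlim => ?_
  choose z hz using fun n => (hω n).1
  obtain ⟨z₀, hz₀, φ, -, hweak⟩ :=
    hG m ω₀ hω₀ ω (fun n => (hω n).2) hlim z fun n => (hz n).1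
  exact ⟨z₀, hz₀, hconv.mem_of_weakly_tendsto hC (.of_forall fun k => (hz (φ k)).2) hweak⟩

end Measurability

lemma inter_nonempty_iff_of_denseRange {X : Type*} [PseudoMetricSpace X] {d : ℕ → X}
    (hd : DenseRange d) {A : ℕ → Set X} {L O : Set X} (hO : IsOpen O)
    (hL : ∀ a ∈ L, ∀ n, a ∈ closure (A n))
    (hA : ∀ x : ℕ → X, (∀ n, x n ∈ A n) →
      ∃ a ∈ L, ∃ φ : ℕ → ℕ, StrictMono φ ∧ Tendsto (x ∘ φ) atTop (𝓝 a)) :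
    (L ∩ O).Nonempty ↔ ∃ (i : ℕ) (p : ℚ), Metric.closedBall (d i) p ⊆ O ∧
      ∀ n : ℕ, (A n ∩ Metric.closedBall (d i) (p + 1 / (n + 1))).Nonempty := by
  constructor
  · rintro ⟨a, haL, haO⟩
    obtain ⟨ε, hε, hball⟩ := Metric.isOpen_iff.1 hO a haO
    obtain ⟨i, hi⟩ := hd.exists_dist_lt a (half_pos hε)
    obtain ⟨p, hip, hp⟩ := exists_rat_btwn hi
    refine ⟨i, p, fun y hy => hball ?_, fun n => ?_⟩
    · have := dist_triangle y (d i) a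
      have := Metric.mem_closedBall.1 hy
      rw [dist_comm] at hip
      exact Metric.mem_ball.2 (by linarith)
    · obtain ⟨x, hxA, hxa⟩ := Metric.mem_closure_iff.1 (hL a haL n) (1 / (n + 1))
        Nat.one_div_pos_of_nat
      refine ⟨x, hxA, ?_⟩
      have := dist_triangle x a (d i)
      rw [dist_comm] at hxa
      exact Metric.mem_closedBall.2 (by linarith)
  · rintro ⟨i, p, hpO, hA_ball⟩
    choose x hxA hx_ball using hA_ball
    obtain ⟨a, haL, φ, hφ, hlim⟩ := hA x hxA
    have hdist : dist a (d i) ≤ p + 0 :=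
      le_of_tendsto_of_tendsto' (hlim.dist tendsto_const_nhds)
        (tendsto_const_nhds.add (tendsto_one_div_add_atTop_nhds_zero_nat.comp hφ.tendsto_atTop))
        fun k => hx_ball (φ k)
    exact ⟨a, haL, hpO (by simpa using hdist)⟩

section Cocycle

variable {Ω X : Type*} {Φ : ℝ → ℝ → Ω → X → Set X} {θ : ℝ → Ω → Ω} {K : ℝ → Ω → Set X}

lemma imageSet10_mono {t τ : ℝ} {ω : Ω} {S S' : Set X} (h : S ⊆ S') :
    imageSet10 Φ t τ ω S ⊆ imageSet10 Φ t τ ω S' :=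
  biUnion_subset_biUnion_left h

lemma imageSet10_add
    (hΦcoc : ∀ t s : ℝ, 0 ≤ t → 0 ≤ s → ∀ (τ : ℝ) (ω : Ω) (x : X),
      Φ (t + s) τ ω x = ⋃ y ∈ Φ s τ ω x, Φ t (τ + s) (θ s ω) y)
    {t s : ℝ} (ht : 0 ≤ t) (hs : 0 ≤ s) (τ : ℝ) (ω : Ω) (S : Set X) :
    imageSet10 Φ (t + s) τ ω S = imageSet10 Φ t (τ + s) (θ s ω) (imageSet10 Φ s τ ω S) := by
  simp only [imageSet10, hΦcoc t s ht hs, biUnion_iUnion]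

lemma pullbackImage_add (hθadd : ∀ t s : ℝ, θ (t + s) = θ t ∘ θ s)
    (hΦcoc : ∀ t s : ℝ, 0 ≤ t → 0 ≤ s → ∀ (τ : ℝ) (ω : Ω) (x : X),
      Φ (t + s) τ ω x = ⋃ y ∈ Φ s τ ω x, Φ t (τ + s) (θ s ω) y)
    {s r : ℝ} (hs : 0 ≤ s) (hr : 0 ≤ r) (τ : ℝ) (ω : Ω) :
    pullbackImage Φ θ K τ (s + r) ω =
      imageSet10 Φ s (τ - s) (θ (-s) ω) (pullbackImage Φ θ K (τ - s) r (θ (-s) ω)) := by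
  have hθ : ∀ a b ω, θ a (θ b ω) = θ (a + b) ω := fun a b ω => by rw [hθadd]; rfl
  rw [pullbackImage, imageSet10_add hΦcoc hs hr, pullbackImage, hθ, hθ]
  congr 1 <;> ring_nf

lemma omegaLimit10_subset_closure_pullbackImage [MetricSpace X]
    (hθadd : ∀ t s : ℝ, θ (t + s) = θ t ∘ θ s)
    (hΦcoc : ∀ t s : ℝ, 0 ≤ t → 0 ≤ s → ∀ (τ : ℝ) (ω : Ω) (x : X),
      Φ (t + s) τ ω x = ⋃ y ∈ Φ s τ ω x, Φ t (τ + s) (θ s ω) y)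
    (hKabs : ∀ (τ : ℝ) (ω : Ω), ∃ T, ∀ t, T ≤ t → pullbackImage Φ θ K τ t ω ⊆ K τ ω)
    {s : ℝ} (hs : 0 ≤ s) (τ : ℝ) (ω : Ω) :
    omegaLimit10 Φ θ K τ ω ⊆ closure (pullbackImage Φ θ K τ s ω) := by
  obtain ⟨T, hT⟩ := hKabs (τ - s) (θ (-s) ω)
  have htail : (⋃ (t : ℝ) (_ : s + max T 0 ≤ t), pullbackImage Φ θ K τ t ω) ⊆
      pullbackImage Φ θ K τ s ω := by
    refine iUnion₂_subset fun t ht => ?_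
    have hr : max T 0 ≤ t - s := by linarith
    rw [← add_sub_cancel s t, pullbackImage_add hθadd hΦcoc hs (le_of_max_le_right hr)]
    exact imageSet10_mono (hT _ (le_of_max_le_left hr))
  exact fun a ha => closure_mono htail (mem_iInter₂.1 ha _ (by positivity))

lemma mem_omegaLimit10_of_tendsto [MetricSpace X] {τ : ℝ} {ω : Ω} {t : ℕ → ℝ}
    (ht : Tendsto t atTop atTop) {x : ℕ → X} (hx : ∀ n, x n ∈ pullbackImage Φ θ K τ (t n) ω)
    {a : X} (hlim : Tendsto x atTop (𝓝 a)) : a ∈ omegaLimit10 Φ θ K τ ω :=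
  mem_iInter₂.2 fun r _ => mem_closure_of_tendsto hlim <|
    (ht.eventually_ge_atTop r).mono fun n hn => mem_iUnion₂.2 ⟨t n, hn, hx n⟩

end Cocycle

theorem stmt10_general {Ω X : Type*}
    [NormedAddCommGroup X] [NormedSpace ℝ X]
    [TopologicalSpace.SeparableSpace X]
    [MetricSpace Ω] [MeasurableSpace Ω] [BorelSpace Ω]
    (Ωm : ℕ → Set Ω) (hΩm : ∀ m, MeasurableSet (Ωm m)) (hΩcover : ⋃ m, Ωm m = univ)
    (θ : ℝ → Ω → Ω)
    (hθadd : ∀ t s : ℝ, θ (t + s) = θ t ∘ θ s)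
    (hθmeas : ∀ t : ℝ, Measurable (θ t))
    (Φ : ℝ → ℝ → Ω → X → Set X)
    (hΦcoc : ∀ t s : ℝ, 0 ≤ t → 0 ≤ s → ∀ (τ : ℝ) (ω : Ω) (x : X),
      Φ (t + s) τ ω x = ⋃ y ∈ Φ s τ ω x, Φ t (τ + s) (θ s ω) y)
    (𝒟 : Set (ℝ → Ω → Set X))
    (hac : ∀ (τ : ℝ) (ω : Ω), ∀ D ∈ 𝒟, ∀ (t : ℕ → ℝ) (x : ℕ → X),
      Tendsto t atTop atTop →
      (∀ n, x n ∈ imageSet10 Φ (t n) (τ - t n) (θ (-(t n)) ω)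
        (D (τ - t n) (θ (-(t n)) ω))) →
      ∃ a : X, ∃ φ : ℕ → ℕ, StrictMono φ ∧ Tendsto (fun k => x (φ k)) atTop (𝓝 a))
    (K : ℝ → Ω → Set X) (hK𝒟 : K ∈ 𝒟)
    (hKabs : ∀ (τ : ℝ) (ω : Ω), ∀ D ∈ 𝒟, ∃ T > 0, ∀ t : ℝ, T ≤ t →
      imageSet10 Φ t (τ - t) (θ (-t) ω) (D (τ - t) (θ (-t) ω)) ⊆ K τ ω)
    -- `ω ↦ Φ(t, τ, ω, K(τ, ω))` restricted to `Ω_m` is weakly upper semicontinuous: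
    (hwusc : ∀ m : ℕ, ∀ t : ℝ, 0 ≤ t → ∀ τ : ℝ, ∀ ω₀ ∈ Ωm m, ∀ ω : ℕ → Ω,
      (∀ n, ω n ∈ Ωm m) → Tendsto ω atTop (𝓝 ω₀) →
      ∀ z : ℕ → X, (∀ n, z n ∈ imageSet10 Φ t τ (ω n) (K τ (ω n))) →
      ∃ z₀ ∈ imageSet10 Φ t τ ω₀ (K τ ω₀), ∃ φ : ℕ → ℕ, StrictMono φ ∧
        ∀ ℓ : X →L[ℝ] ℝ, Tendsto (fun k => ℓ (z (φ k))) atTop (𝓝 (ℓ z₀))) :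
    ∀ τ : ℝ, ∀ O : Set X, IsOpen O →
      MeasurableSet {ω : Ω | (omegaLimit10 Φ θ K τ ω ∩ O).Nonempty} := by
  intro τ O hO
  set d := TopologicalSpace.denseSeq X
  have hK_absorbs_K τ ω : ∃ T, ∀ t, T ≤ t → pullbackImage Φ θ K τ t ω ⊆ K τ ω :=
    (hKabs τ ω K hK𝒟).imp fun _ hT => hT.2
  have hlimit ω (x : ℕ → X) (hx : ∀ n : ℕ, x n ∈ pullbackImage Φ θ K τ n ω) :
      ∃ a ∈ omegaLimit10 Φ θ K τ ω, ∃ φ : ℕ → ℕ, StrictMono φ ∧ Tendsto (x ∘ φ) atTop (𝓝 a) := by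
    obtain ⟨a, φ, hφ, hlim⟩ := hac τ ω K hK𝒟 (↑) x tendsto_natCast_atTop_atTop hx
    exact ⟨a, mem_omegaLimit10_of_tendsto
      (tendsto_natCast_atTop_atTop.comp hφ.tendsto_atTop) (fun k => hx (φ k)) hlim, φ, hφ, hlim⟩
  have hset : {ω | (omegaLimit10 Φ θ K τ ω ∩ O).Nonempty} =
      ⋃ (i : ℕ) (p : ℚ) (_ : Metric.closedBall (d i) p ⊆ O), ⋂ n : ℕ,
        {ω | (pullbackImage Φ θ K τ n ω ∩ Metric.closedBall (d i) (p + 1 / (n + 1))).Nonempty} := by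
    ext ω
    simpa only [mem_ofPred_eq, mem_iUnion, mem_iInter, exists_prop] using
      inter_nonempty_iff_of_denseRange (TopologicalSpace.denseRange_denseSeq X) hO
        (fun a ha n => omegaLimit10_subset_closure_pullbackImage hθadd hΦcoc hK_absorbs_K
          n.cast_nonneg τ ω ha) (hlimit ω)
  rw [hset]
  refine .iUnion fun i => .iUnion fun p => .iUnion fun _ => .iInter fun n => ?_
  exact hθmeas (-n) <| WeaklyUpperSemicontinuousOn.measurableSet_inter_nonempty
    (G := fun ω => imageSet10 Φ n (τ - n) ω (K (τ - n) ω))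
    (fun m => hwusc m n n.cast_nonneg (τ - n)) hΩm hΩcover (convex_closedBall _ _)
    Metric.isClosed_closedBall

/-- Let `X` be a separable Banach space and `Ω` a metric space that is a
countable union of Borel sets `Ω_m`, with a group `θ` of Borel transformations.  If `Φ` is a
`𝒟`-pullback asymptotically compact multivalued non-autonomous cocycle with upper
semicontinuous maps `Φ(t, τ, ω, ·)`, `K ∈ 𝒟` is a closed `𝒟`-pullback absorbing set, and
`ω ↦ Φ(t, τ, ω, K(τ, ω))` restricted to each `Ω_m` is weakly upper semicontinuous, then
`ω ↦ Ω(K)(τ, ω)` is Borel measurable for every `τ`. -/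
theorem stmt10 {Ω X : Type*}
    [NormedAddCommGroup X] [NormedSpace ℝ X] [CompleteSpace X]
    [TopologicalSpace.SeparableSpace X]
    [MetricSpace Ω] [MeasurableSpace Ω] [BorelSpace Ω]
    (Ωm : ℕ → Set Ω) (hΩm : ∀ m, MeasurableSet (Ωm m)) (hΩcover : ⋃ m, Ωm m = univ)
    (θ : ℝ → Ω → Ω) (hθ0 : θ 0 = id)
    (hθadd : ∀ t s : ℝ, θ (t + s) = θ t ∘ θ s)
    (hθmeas : ∀ t : ℝ, Measurable (θ t))
    (Φ : ℝ → ℝ → Ω → X → Set X)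
    (hΦ0 : ∀ (τ : ℝ) (ω : Ω) (x : X), Φ 0 τ ω x = {x})
    (hΦne : ∀ t : ℝ, 0 ≤ t → ∀ (τ : ℝ) (ω : Ω) (x : X), (Φ t τ ω x).Nonempty)
    (hΦcl : ∀ t : ℝ, 0 ≤ t → ∀ (τ : ℝ) (ω : Ω) (x : X), IsClosed (Φ t τ ω x))
    (hΦcoc : ∀ t s : ℝ, 0 ≤ t → 0 ≤ s → ∀ (τ : ℝ) (ω : Ω) (x : X),
      Φ (t + s) τ ω x = ⋃ y ∈ Φ s τ ω x, Φ t (τ + s) (θ s ω) y)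
    (𝒟 : Set (ℝ → Ω → Set X))
    (h𝒟ne : ∀ D ∈ 𝒟, ∀ (τ : ℝ) (ω : Ω), (D τ ω).Nonempty)
    (h𝒟inc : ∀ D ∈ 𝒟, ∀ D' : ℝ → Ω → Set X,
      (∀ (τ : ℝ) (ω : Ω), D' τ ω ⊆ D τ ω) → (∀ (τ : ℝ) (ω : Ω), (D' τ ω).Nonempty) →
      D' ∈ 𝒟)
    (hac : ∀ (τ : ℝ) (ω : Ω), ∀ D ∈ 𝒟, ∀ (t : ℕ → ℝ) (x : ℕ → X),
      Tendsto t atTop atTop →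
      (∀ n, x n ∈ imageSet10 Φ (t n) (τ - t n) (θ (-(t n)) ω)
        (D (τ - t n) (θ (-(t n)) ω))) →
      ∃ a : X, ∃ φ : ℕ → ℕ, StrictMono φ ∧ Tendsto (fun k => x (φ k)) atTop (𝓝 a))
    (husc : ∀ t : ℝ, 0 ≤ t → ∀ (τ : ℝ) (ω : Ω) (x : X), ∀ U : Set X, IsOpen U →
      Φ t τ ω x ⊆ U → ∃ δ > 0, ∀ x' : X, dist x' x < δ → Φ t τ ω x' ⊆ U)
    (K : ℝ → Ω → Set X) (hK𝒟 : K ∈ 𝒟)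
    (hKcl : ∀ (τ : ℝ) (ω : Ω), IsClosed (K τ ω))
    (hKabs : ∀ (τ : ℝ) (ω : Ω), ∀ D ∈ 𝒟, ∃ T > 0, ∀ t : ℝ, T ≤ t →
      imageSet10 Φ t (τ - t) (θ (-t) ω) (D (τ - t) (θ (-t) ω)) ⊆ K τ ω)
    -- `ω ↦ Φ(t, τ, ω, K(τ, ω))` restricted to `Ω_m` is weakly upper semicontinuous:
    (hwusc : ∀ m : ℕ, ∀ t : ℝ, 0 ≤ t → ∀ τ : ℝ, ∀ ω₀ ∈ Ωm m, ∀ ω : ℕ → Ω,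
      (∀ n, ω n ∈ Ωm m) → Tendsto ω atTop (𝓝 ω₀) →
      ∀ z : ℕ → X, (∀ n, z n ∈ imageSet10 Φ t τ (ω n) (K τ (ω n))) →
      ∃ z₀ ∈ imageSet10 Φ t τ ω₀ (K τ ω₀), ∃ φ : ℕ → ℕ, StrictMono φ ∧
        ∀ ℓ : X →L[ℝ] ℝ, Tendsto (fun k => ℓ (z (φ k))) atTop (𝓝 (ℓ z₀))) :
    ∀ τ : ℝ, ∀ O : Set X, IsOpen O →
      MeasurableSet {ω : Ω | (omegaLimit10 Φ θ K τ ω ∩ O).Nonempty} :=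
  stmt10_general Ωm hΩm hΩcover θ hθadd hθmeas Φ hΦcoc 𝒟 hac K hK𝒟 hKabs hwusc
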